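/- Let K be a compact Hausdorff space and let f : C(K) → ℂ be an orthogonally additive holomorphic function of bounded type with Taylor expansion f = ∑_{k≥1} P_k at zero. Suppose for each k that μ_k is a complex regular Borel measure on K with P_k(x) = ∫_K x(t)^k dμ_k(t) for all x, and that μ is a finite positive Borel measure on K such that μ_k is absolutely continuous with respect to μ for every k. Then there exist functions g_k ∈ L¹(μ) with ‖g_k‖_{L¹(μ)} ≤ ‖P_k‖ for every k, ∑_{k≥1} ‖g_k‖_{L¹(μ)} r^k < ∞ for every r > 0, and f(x) = ∫_K ∑_{k≥1} g_k(t) x(t)^k dμ(t) for all x ∈ C(K), the series ∑_k g_k x^k converging absolutely in L¹(μ) for every x. -/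

import Mathlib

/-!
Write `μₖ = wₖ · mₖ` with `|wₖ| = 1`. The density `gₖ = (dmₖ/dμ) · wₖ` represents `Pₖ` against
`μ`, and `‖gₖ‖_{L¹(μ)} = mₖ(K)`. This total variation is at most `‖Pₖ‖`: a measurable `k`-th root
`u` of `w̄ₖ` satisfies `∫ uᵏ wₖ dmₖ = mₖ(K)`, and by regularity `u` is an `L¹(mₖ)`-limit of
continuous functions in the unit ball of `C(K)`, at which `|Pₖ| ≤ ‖Pₖ‖`. Hence the series
`∑ₖ gₖ xᵏ` converges absolutely in `L¹(μ)`, and the Taylor series of `f` integrates term by term.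
-/

open MeasureTheory Filter Topology

open MeasureTheory Filter Topology

/-- `f` is orthogonally additive when it is additive on orthogonal pairs. -/
def IsOrthAdd {K : Type*} [TopologicalSpace K] [CompactSpace K]
    (f : C(K, ℂ) → ℂ) : Prop :=
  ∀ x y : C(K, ℂ), x * y = 0 → f (x + y) = f x + f y

/-- `P` is a continuous `k`-homogeneous polynomial on `C(K, ℂ)`. -/
def IsHomogPoly {K : Type*} [TopologicalSpace K] [CompactSpace K]
    (k : ℕ) (P : C(K, ℂ) → ℂ) : Prop :=
  ∃ M : ContinuousMultilinearMap ℂ (fun _ : Fin k => C(K, ℂ)) ℂ,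
    ∀ x : C(K, ℂ), P x = M (fun _ => x)

/-- The norm `‖P‖ = sup_{‖x‖ ≤ 1} |P x|` of a polynomial on `C(K, ℂ)`. -/
noncomputable def polyNorm {K : Type*} [TopologicalSpace K] [CompactSpace K]
    (P : C(K, ℂ) → ℂ) : ℝ :=
  sSup ((fun x => ‖P x‖) '' Metric.closedBall (0 : C(K, ℂ)) 1)

lemma norm_pow_sub_pow_le_of_norm_le_one {R : Type*} [SeminormedRing R] [NormOneClass R]
    {a b : R} (ha : ‖a‖ ≤ 1) (hb : ‖b‖ ≤ 1) (n : ℕ) : ‖a ^ n - b ^ n‖ ≤ n * ‖a - b‖ := by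
  induction n with
  | zero => simp
  | succ n ih =>
    have hbn : ‖b ^ n‖ ≤ 1 := (norm_pow_le b n).trans (pow_le_one₀ (norm_nonneg b) hb)
    calc ‖a ^ (n + 1) - b ^ (n + 1)‖ = ‖a * (a ^ n - b ^ n) + (a - b) * b ^ n‖ := by
          rw [pow_succ', pow_succ', mul_sub, sub_mul, sub_add_sub_cancel]
      _ ≤ ‖a‖ * ‖a ^ n - b ^ n‖ + ‖a - b‖ * ‖b ^ n‖ :=
          (norm_add_le _ _).trans (add_le_add (norm_mul_le _ _) (norm_mul_le _ _))
      _ ≤ 1 * (n * ‖a - b‖) + ‖a - b‖ * 1 := by gcongr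
      _ = (n + 1 : ℕ) * ‖a - b‖ := by push_cast; ring

section UnitBallRetraction

variable {E : Type*} [NormedAddCommGroup E] [NormedSpace ℝ E]

noncomputable def unitBallRetraction (y : E) : E := (max 1 ‖y‖)⁻¹ • y

lemma continuous_unitBallRetraction : Continuous (unitBallRetraction : E → E) :=
  ((continuous_const.max continuous_norm).inv₀ fun _ => by positivity).smul continuous_id

lemma norm_unitBallRetraction_le_one (y : E) : ‖unitBallRetraction y‖ ≤ 1 := by
  rw [unitBallRetraction, norm_smul, norm_inv, Real.norm_of_nonneg (by positivity)]
  exact inv_mul_le_one_of_le₀ (le_max_right _ _) (by positivity)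

lemma norm_unitBallRetraction_sub_le {u : E} (hu : ‖u‖ ≤ 1) (y : E) :
    ‖unitBallRetraction y - u‖ ≤ 2 * ‖y - u‖ := by
  have hy : ‖unitBallRetraction y - y‖ ≤ ‖y - u‖ := by
    rcases le_total ‖y‖ 1 with h | h
    · simp [unitBallRetraction, max_eq_left h]
    · have hy0 : 0 < ‖y‖ := one_pos.trans_le h
      calc ‖unitBallRetraction y - y‖ = ‖y‖ - 1 := by
            rw [unitBallRetraction, max_eq_right h,
              show ‖y‖⁻¹ • y - y = (‖y‖⁻¹ - 1) • y by rw [sub_smul, one_smul], norm_smul,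
              Real.norm_of_nonpos (by linarith [inv_le_one_of_one_le₀ h]), neg_sub, sub_mul,
              one_mul, inv_mul_cancel₀ hy0.ne']
        _ ≤ ‖y‖ - ‖u‖ := by linarith
        _ ≤ ‖y - u‖ := norm_sub_norm_le y u
  calc ‖unitBallRetraction y - u‖ ≤ ‖unitBallRetraction y - y‖ + ‖y - u‖ :=
        norm_sub_le_norm_sub_add_norm_sub _ _ _
    _ ≤ 2 * ‖y - u‖ := by linarith

end UnitBallRetraction

theorem exists_continuousMap_norm_le_one_integral_norm_sub_le {K E : Type*} [TopologicalSpace K]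
    [CompactSpace K] [NormalSpace K] [MeasurableSpace K] [BorelSpace K] [NormedAddCommGroup E]
    [NormedSpace ℝ E] {m : Measure K} [IsFiniteMeasure m] [m.WeaklyRegular] {u : K → E}
    (hu : AEStronglyMeasurable u m) (hu1 : ∀ t, ‖u t‖ ≤ 1) {ε : ℝ} (hε : 0 < ε) :
    ∃ z : C(K, E), ‖z‖ ≤ 1 ∧ ∫ t, ‖z t - u t‖ ∂m ≤ ε := by
  have hu_int : Integrable u m := .of_bound hu 1 (.of_forall hu1)
  obtain ⟨y, hy, hy_int⟩ := hu_int.exists_boundedContinuous_integral_sub_le (half_pos hε)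
  refine ⟨⟨unitBallRetraction ∘ y, continuous_unitBallRetraction.comp y.continuous⟩,
    (ContinuousMap.norm_le _ zero_le_one).2 fun t => norm_unitBallRetraction_le_one _, ?_⟩
  calc ∫ t, ‖unitBallRetraction (y t) - u t‖ ∂m ≤ ∫ t, 2 * ‖u t - y t‖ ∂m := by
        refine integral_mono_of_nonneg (.of_forall fun t => norm_nonneg _)
          ((hu_int.sub hy_int).norm.const_mul 2) (.of_forall fun t => ?_)
        simpa only [norm_sub_rev (y t)] using norm_unitBallRetraction_sub_le (hu1 t) (y t)
    _ = 2 * ∫ t, ‖u t - y t‖ ∂m := integral_const_mul _ _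
    _ ≤ ε := by linarith

lemma exists_measurable_norm_le_one_pow_mul_eq_one {K : Type*} [MeasurableSpace K] {w : K → ℂ}
    (hwm : Measurable w) (hw1 : ∀ t, ‖w t‖ = 1) {k : ℕ} (hk : k ≠ 0) :
    ∃ u : K → ℂ, Measurable u ∧ (∀ t, ‖u t‖ ≤ 1) ∧ ∀ t, u t ^ k * w t = 1 := by
  have hpow : ∀ t, ((w t)⁻¹ ^ ((k : ℂ)⁻¹)) ^ k = (w t)⁻¹ := fun t => Complex.cpow_nat_inv_pow _ hk
  refine ⟨fun t => (w t)⁻¹ ^ ((k : ℂ)⁻¹), hwm.inv.pow_const _, fun t => ?_, fun t => ?_⟩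
  · refine ((pow_eq_one_iff_of_nonneg (norm_nonneg _) hk).1 ?_).le
    rw [← norm_pow, hpow, norm_inv, hw1, inv_one]
  · rw [hpow, inv_mul_cancel₀ (norm_ne_zero_iff.1 (by simp [hw1 t]))]

section RepresentingMeasure

variable {K : Type*} [TopologicalSpace K] [CompactSpace K] [MeasurableSpace K] {m : Measure K}
  [IsFiniteMeasure m] {w : K → ℂ} {k : ℕ} {P : C(K, ℂ) → ℂ}

lemma norm_le_polyNorm_of_eq_integral (hw1 : ∀ t, ‖w t‖ = 1)
    (hrep : ∀ x, P x = ∫ t, x t ^ k * w t ∂m) {x : C(K, ℂ)} (hx : ‖x‖ ≤ 1) :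
    ‖P x‖ ≤ polyNorm P := by
  have hbound : ∀ y : C(K, ℂ), ‖y‖ ≤ 1 → ‖P y‖ ≤ m.real Set.univ := fun y hy => by
    rw [hrep, ← one_mul (m.real _)]
    refine norm_integral_le_of_norm_le_const (.of_forall fun t => ?_)
    rw [norm_mul, norm_pow, hw1, mul_one]
    exact pow_le_one₀ (norm_nonneg _) ((y.norm_coe_le_norm t).trans hy)
  exact le_csSup ⟨m.real Set.univ, by rintro _ ⟨y, hy, rfl⟩; exact hbound y (by simpa using hy)⟩
    ⟨x, by simpa using hx, rfl⟩

lemma measureReal_univ_le_norm_add_integral_norm_sub [OpensMeasurableSpace K]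
    (hwm : Measurable w) (hw1 : ∀ t, ‖w t‖ = 1) (hrep : ∀ x, P x = ∫ t, x t ^ k * w t ∂m)
    {u : K → ℂ} (hum : Measurable u) (hu1 : ∀ t, ‖u t‖ ≤ 1) (huw : ∀ t, u t ^ k * w t = 1)
    {z : C(K, ℂ)} (hz : ‖z‖ ≤ 1) :
    m.real Set.univ ≤ ‖P z‖ + k * ∫ t, ‖z t - u t‖ ∂m := by
  have hz1 : ∀ t, ‖z t‖ ≤ 1 := fun t => (z.norm_coe_le_norm t).trans hz
  have hzu_int : Integrable (fun t => ‖z t - u t‖) m :=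
    (Integrable.of_bound (z.continuous.measurable.sub hum).aestronglyMeasurable 2
      (.of_forall fun t => (norm_sub_le _ _).trans (by linarith [hz1 t, hu1 t]))).norm
  have hpow_int : ∀ v : K → ℂ, Measurable v → (∀ t, ‖v t‖ ≤ 1) →
      Integrable (fun t => v t ^ k * w t) m := fun v hv hv1 =>
    .of_bound ((hv.pow_const k).mul hwm).aestronglyMeasurable 1 (.of_forall fun t => by
      rw [norm_mul, norm_pow, hw1, mul_one]; exact pow_le_one₀ (norm_nonneg _) (hv1 t))
  have hdiff : ‖(m.real Set.univ : ℂ) - P z‖ ≤ k * ∫ t, ‖z t - u t‖ ∂m := by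
    have hone : (m.real Set.univ : ℂ) = ∫ t, u t ^ k * w t ∂m := by simp [huw]
    rw [hone, hrep, ← integral_sub (hpow_int u hum hu1) (hpow_int z z.continuous.measurable hz1),
      ← integral_const_mul]
    refine norm_integral_le_of_norm_le (hzu_int.const_mul _) (.of_forall fun t => ?_)
    rw [← sub_mul, norm_mul, hw1, mul_one, norm_sub_rev (z t)]
    exact norm_pow_sub_pow_le_of_norm_le_one (hu1 t) (hz1 t) k
  calc m.real Set.univ = ‖(m.real Set.univ : ℂ)‖ := by
        rw [Complex.norm_real, Real.norm_of_nonneg measureReal_nonneg]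
    _ ≤ ‖P z‖ + ‖(m.real Set.univ : ℂ) - P z‖ := norm_le_norm_add_norm_sub' _ _
    _ ≤ ‖P z‖ + k * ∫ t, ‖z t - u t‖ ∂m := by gcongr

theorem measureReal_univ_le_polyNorm [NormalSpace K] [BorelSpace K] [m.WeaklyRegular]
    (hwm : Measurable w) (hw1 : ∀ t, ‖w t‖ = 1) (hk : k ≠ 0)
    (hrep : ∀ x, P x = ∫ t, x t ^ k * w t ∂m) :
    m.real Set.univ ≤ polyNorm P := by
  obtain ⟨u, hum, hu1, huw⟩ := exists_measurable_norm_le_one_pow_mul_eq_one hwm hw1 hk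
  refine le_of_forall_pos_le_add fun ε hε => ?_
  have hk_pos : (0 : ℝ) < k := by positivity
  obtain ⟨z, hz1, hz⟩ := exists_continuousMap_norm_le_one_integral_norm_sub_le (m := m)
    hum.aestronglyMeasurable hu1 (div_pos hε hk_pos)
  calc m.real Set.univ ≤ ‖P z‖ + k * ∫ t, ‖z t - u t‖ ∂m :=
        measureReal_univ_le_norm_add_integral_norm_sub hwm hw1 hrep hum hu1 huw hz1
    _ ≤ polyNorm P + k * (ε / k) := by
        gcongr
        exact norm_le_polyNorm_of_eq_integral hw1 hrep hz1
    _ = polyNorm P + ε := by field_simp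

end RepresentingMeasure

section PolarDensity

variable {K : Type*} [MeasurableSpace K] {m μ : Measure K} {w : K → ℂ}

/-- The density `d(w • m)/dμ` of the complex measure `w • m`. -/
noncomputable def polarDensity (m μ : Measure K) (w : K → ℂ) (t : K) : ℂ :=
  ((m.rnDeriv μ t).toReal : ℂ) * w t

lemma norm_polarDensity (hw1 : ∀ t, ‖w t‖ = 1) (t : K) :
    ‖polarDensity m μ w t‖ = (m.rnDeriv μ t).toReal := by
  rw [polarDensity, norm_mul, Complex.norm_real, Real.norm_of_nonneg ENNReal.toReal_nonneg, hw1,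
    mul_one]

lemma measurable_polarDensity (hwm : Measurable w) : Measurable (polarDensity m μ w) :=
  (Complex.measurable_ofReal.comp (m.measurable_rnDeriv μ).ennreal_toReal).mul hwm

lemma integrable_polarDensity [IsFiniteMeasure m] (hwm : Measurable w) (hw1 : ∀ t, ‖w t‖ = 1) :
    Integrable (polarDensity m μ w) μ :=
  Measure.integrable_toReal_rnDeriv.mono' (measurable_polarDensity hwm).aestronglyMeasurable
    (.of_forall fun t => (norm_polarDensity hw1 t).le)

lemma integral_norm_polarDensity [IsFiniteMeasure m] [SigmaFinite μ] (hac : m ≪ μ)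
    (hw1 : ∀ t, ‖w t‖ = 1) : ∫ t, ‖polarDensity m μ w t‖ ∂μ = m.real Set.univ := by
  simp_rw [norm_polarDensity hw1]
  exact Measure.integral_toReal_rnDeriv hac

lemma integral_polarDensity_mul [IsFiniteMeasure m] [SigmaFinite μ] (hac : m ≪ μ) (h : K → ℂ) :
    ∫ t, polarDensity m μ w t * h t ∂μ = ∫ t, h t * w t ∂m := by
  rw [← integral_rnDeriv_smul hac]
  congr 1 with t
  rw [polarDensity, Complex.real_smul]
  ring

end PolarDensity

section PowerSeries

variable {K : Type*} [TopologicalSpace K] [CompactSpace K] [MeasurableSpace K] {μ : Measure K}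

lemma integrable_mul_pow [OpensMeasurableSpace K] {g : K → ℂ} (hg : Integrable g μ)
    (x : C(K, ℂ)) (k : ℕ) :
    Integrable (fun t => g t * x t ^ k) μ :=
  hg.mul_bdd (x.continuous.measurable.pow_const k).aestronglyMeasurable (.of_forall fun t => by
    rw [norm_pow]; exact pow_le_pow_left₀ (norm_nonneg _) (x.norm_coe_le_norm t) k)

lemma integral_norm_mul_pow_le {g : K → ℂ} (hg : Integrable g μ) (x : C(K, ℂ)) (k : ℕ) :
    ∫ t, ‖g t * x t ^ k‖ ∂μ ≤ (∫ t, ‖g t‖ ∂μ) * ‖x‖ ^ k := by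
  rw [← integral_mul_const]
  refine integral_mono_of_nonneg (.of_forall fun t => norm_nonneg _) (hg.norm.mul_const _)
    (.of_forall fun t => ?_)
  simp only [norm_mul, norm_pow]
  gcongr
  exact x.norm_coe_le_norm t

lemma summable_integral_norm_mul_pow {g : ℕ → K → ℂ} (hg : ∀ k, Integrable (g (k + 1)) μ)
    (hsum : ∀ r : ℝ, 0 < r → Summable fun k => (∫ t, ‖g (k + 1) t‖ ∂μ) * r ^ (k + 1))
    (x : C(K, ℂ)) : Summable fun k => ∫ t, ‖g (k + 1) t * x t ^ (k + 1)‖ ∂μ :=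
  (hsum (‖x‖ + 1) (by positivity)).of_nonneg_of_le (fun _ => integral_nonneg fun _ => norm_nonneg _)
    fun k => (integral_norm_mul_pow_le (hg k) x (k + 1)).trans (by gcongr; linarith)

end PowerSeries

theorem orthAdd_boundedType_powerSeriesRepr_of_dominating_general
    {K : Type*} [TopologicalSpace K] [CompactSpace K] [T2Space K]
    [MeasurableSpace K] [BorelSpace K]
    (f : C(K, ℂ) → ℂ) (P : ℕ → C(K, ℂ) → ℂ)
    (hf : ∀ x : C(K, ℂ), HasSum (fun k : ℕ => P (k + 1) x) (f x))
    (hb : ∀ r : ℝ, 0 < r → Summable (fun k : ℕ => polyNorm (P (k + 1)) * r ^ (k + 1)))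
    (m : ℕ → Measure K) (w : ℕ → K → ℂ)
    (hfin : ∀ k, 1 ≤ k → IsFiniteMeasure (m k))
    (hreg : ∀ k, 1 ≤ k → (m k).Regular)
    (hwm : ∀ k, 1 ≤ k → Measurable (w k))
    (hw1 : ∀ k, 1 ≤ k → ∀ t, ‖w k t‖ = 1)
    (hrep : ∀ k, 1 ≤ k → ∀ x : C(K, ℂ), P k x = ∫ t, (x t) ^ k * w k t ∂(m k))
    (μ : Measure K) [IsFiniteMeasure μ]
    (hac : ∀ k, 1 ≤ k → m k ≪ μ) :
    ∃ g : ℕ → K → ℂ,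
      (∀ k, 1 ≤ k → Integrable (g k) μ) ∧
      (∀ k, 1 ≤ k → (∫ t, ‖g k t‖ ∂μ) ≤ polyNorm (P k)) ∧
      (∀ r : ℝ, 0 < r →
        Summable (fun k : ℕ => (∫ t, ‖g (k + 1) t‖ ∂μ) * r ^ (k + 1))) ∧
      (∀ x : C(K, ℂ),
        Summable (fun k : ℕ => ∫ t, ‖g (k + 1) t * (x t) ^ (k + 1)‖ ∂μ)) ∧
      (∀ x : C(K, ℂ), f x = ∫ t, (∑' k : ℕ, g (k + 1) t * (x t) ^ (k + 1)) ∂μ) := by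
  have hk_succ : ∀ k : ℕ, 1 ≤ k + 1 := fun k => Nat.le_add_left 1 k
  let g k := polarDensity (m k) μ (w k)
  have hg_int : ∀ k, 1 ≤ k → Integrable (g k) μ := fun k hk => by
    have := hfin k hk
    exact integrable_polarDensity (hwm k hk) (hw1 k hk)
  have hg_le : ∀ k, 1 ≤ k → ∫ t, ‖g k t‖ ∂μ ≤ polyNorm (P k) := fun k hk => by
    have := hfin k hk
    have := hreg k hk
    rw [integral_norm_polarDensity (hac k hk) (hw1 k hk)]
    exact measureReal_univ_le_polyNorm (hwm k hk) (hw1 k hk) (by omega) (hrep k hk)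
  have hg_sum : ∀ r : ℝ, 0 < r → Summable fun k => (∫ t, ‖g (k + 1) t‖ ∂μ) * r ^ (k + 1) :=
    fun r hr => (hb r hr).of_nonneg_of_le (fun _ => by positivity)
      fun k => by gcongr; exact hg_le _ (hk_succ k)
  have hterm_sum := summable_integral_norm_mul_pow (fun k => hg_int _ (hk_succ k)) hg_sum
  refine ⟨g, hg_int, hg_le, hg_sum, hterm_sum, fun x => ?_⟩
  rw [← (hf x).tsum_eq, ← integral_tsum_of_summable_integral_norm
    (fun k => integrable_mul_pow (hg_int _ (hk_succ k)) x _) (hterm_sum x)]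
  refine tsum_congr fun k => ?_
  have := hfin (k + 1) (hk_succ k)
  rw [hrep _ (hk_succ k), integral_polarDensity_mul (hac _ (hk_succ k))]

/-- Let `f` be an orthogonally additive holomorphic function of bounded type on
`C(K)` with Taylor expansion `f = ∑_{k ≥ 1} Pₖ` at zero, let `μₖ` (in polar
form `wₖ · mₖ`) be complex regular Borel measures representing the `Pₖ`, and
let `μ` be a finite positive Borel measure with `μₖ ≪ μ` for all `k ≥ 1`.
Then there are `gₖ ∈ L¹(μ)` with `‖gₖ‖_{L¹(μ)} ≤ ‖Pₖ‖`,
`∑_{k ≥ 1} ‖gₖ‖_{L¹(μ)} rᵏ < ∞` for every `r > 0`, the series `∑ₖ gₖ xᵏ`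
converges absolutely in `L¹(μ)` for every `x`, and
`f x = ∫_K ∑_{k ≥ 1} gₖ(t) x(t)^k dμ(t)` for all `x ∈ C(K)`. -/
theorem orthAdd_boundedType_powerSeriesRepr_of_dominating
    {K : Type*} [TopologicalSpace K] [CompactSpace K] [T2Space K]
    [MeasurableSpace K] [BorelSpace K]
    (f : C(K, ℂ) → ℂ) (P : ℕ → C(K, ℂ) → ℂ)
    (hP : ∀ k, 1 ≤ k → IsHomogPoly k (P k))
    (hf : ∀ x : C(K, ℂ), HasSum (fun k : ℕ => P (k + 1) x) (f x))
    (hb : ∀ r : ℝ, 0 < r → Summable (fun k : ℕ => polyNorm (P (k + 1)) * r ^ (k + 1)))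
    (hOA : IsOrthAdd f)
    (m : ℕ → Measure K) (w : ℕ → K → ℂ)
    (hfin : ∀ k, 1 ≤ k → IsFiniteMeasure (m k))
    (hreg : ∀ k, 1 ≤ k → (m k).Regular)
    (hwm : ∀ k, 1 ≤ k → Measurable (w k))
    (hw1 : ∀ k, 1 ≤ k → ∀ t, ‖w k t‖ = 1)
    (hrep : ∀ k, 1 ≤ k → ∀ x : C(K, ℂ), P k x = ∫ t, (x t) ^ k * w k t ∂(m k))
    (μ : Measure K) [IsFiniteMeasure μ]
    (hac : ∀ k, 1 ≤ k → m k ≪ μ) :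
    ∃ g : ℕ → K → ℂ,
      (∀ k, 1 ≤ k → Integrable (g k) μ) ∧
      (∀ k, 1 ≤ k → (∫ t, ‖g k t‖ ∂μ) ≤ polyNorm (P k)) ∧
      (∀ r : ℝ, 0 < r →
        Summable (fun k : ℕ => (∫ t, ‖g (k + 1) t‖ ∂μ) * r ^ (k + 1))) ∧
      (∀ x : C(K, ℂ),
        Summable (fun k : ℕ => ∫ t, ‖g (k + 1) t * (x t) ^ (k + 1)‖ ∂μ)) ∧
      (∀ x : C(K, ℂ), f x = ∫ t, (∑' k : ℕ, g (k + 1) t * (x t) ^ (k + 1)) ∂μ) :=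
  orthAdd_boundedType_powerSeriesRepr_of_dominating_general f P hf hb m w hfin hreg hwm hw1 hrep μ
    hac
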